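/- The 3-round Group Feistel cipher is not super pseudorandom: for any group G and any round functions f₁,f₂,f₃ : G → G, if (L₃,R₃) = F^{(3)}(L₀,R₀) and (L₃',R₃') = F^{(3)}(L₀',R₀) with the same right input R₀, and (L₀'',R₀'') = (F^{(3)})⁻¹(L₃', L₀·(L₀')⁻¹·R₃'), then R₀'' = L₃'·L₃⁻¹·R₀. -/
import Mathlib


/-- One-round Feistel map as an equivalence. -/
def feistelEquiv {G : Type*} [Group G] (f : G → G) : (G × G) ≃ (G × G) where
  toFun p := (p.2, p.1 * f p.2)
  invFun p := (p.2 * (f p.1)⁻¹, p.1)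
  left_inv := by intro p; simp
  right_inv := by intro p; simp

theorem feistel_three_round_not_sprp {G : Type*} [Group G] (f₁ f₂ f₃ : G → G)
    (L₀ R₀ L₀' L₃ R₃ L₃' R₃' L₀'' R₀'' : G)
    (F3 : (G × G) ≃ (G × G))
    (hF3 : F3 = (feistelEquiv f₁).trans ((feistelEquiv f₂).trans (feistelEquiv f₃)))
    (h1 : (L₃, R₃) = F3 (L₀, R₀))
    (h2 : (L₃', R₃') = F3 (L₀', R₀))
    (h3 : (L₀'', R₀'') = F3.symm (L₃', L₀ * L₀'⁻¹ * R₃')) :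
    R₀'' = L₃' * L₃⁻¹ * R₀ := by
  have h3' : F3 (L₀'', R₀'') = (L₃', L₀ * L₀'⁻¹ * R₃') :=
    (F3.eq_symm_apply.mp h3)
  subst hF3
  simp only [feistelEquiv, Equiv.trans_apply, Equiv.coe_fn_mk, Prod.mk.injEq] at h1 h2 h3'
  obtain ⟨a1, a2⟩ := h1
  obtain ⟨b1, b2⟩ := h2
  obtain ⟨c1, c2⟩ := h3'
  -- X := L₀'' * f₁ R₀''
  have hY : R₀'' * f₂ (L₀'' * f₁ R₀'') = L₃' := c1
  rw [hY, b2, ← b1] at c2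
  have hX : L₀'' * f₁ R₀'' = L₀ * f₁ R₀ := by
    have c2' : L₀'' * f₁ R₀'' * f₃ L₃' = L₀ * f₁ R₀ * f₃ L₃' := by
      rw [c2]; group
    exact mul_right_cancel c2'
  rw [hX] at c1
  have : R₀'' = L₃' * (f₂ (L₀ * f₁ R₀))⁻¹ := by
    rw [← c1]; group
  rw [this, a1]
  group
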